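/- Let x ∈ ℝ⁹ with x₁ ≥ ⋯ ≥ x₉ > 0, L₁(x) ≥ 0, det L₁(x) = 0, and let x' be obtained from x by replacing (x₄, x₇) with (x₄+δ, x₇−δ) for small δ > 0 such that x' is still sorted non-increasingly and positive. Then det L₁(x') < 0. -/

import Mathlib

/-! Moving `δ` from `x₇` to `x₄` changes `det L₁` by a quadratic in `δ`: the linear coefficient
is `-2((x₁-x₈)² - (x₂-x₆)² + 4(x₄-x₇)x₉)`, nonpositive because sorting gives
`x₁ - x₈ ≥ x₂ - x₆ ≥ 0` and `x₄ ≥ x₇`, and the quadratic one is `-8x₉ < 0`. Starting from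
`det L₁(x) = 0`, the perturbed determinant is therefore negative. -/

/-- The Hildebrand matrix `L₁` built from a vector `x ∈ ℝ⁹` (indices `x 0, …, x 8`
correspond to `x₁, …, x₉`). -/
def L1 (x : Fin 9 → ℝ) : Matrix (Fin 3) (Fin 3) ℝ :=
  !![2 * x 8, x 7 - x 0, x 5 - x 1;
     x 7 - x 0, 2 * x 6, x 4 - x 2;
     x 5 - x 1, x 4 - x 2, 2 * x 3]

def diagShift (x : Fin 9 → ℝ) (δ : ℝ) : Fin 9 → ℝ :=
  fun i => if i = 3 then x 3 + δ else if i = 6 then x 6 - δ else x i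

theorem det_L1 (x : Fin 9 → ℝ) :
    (L1 x).det = 8 * x 8 * x 6 * x 3 - 2 * x 8 * (x 4 - x 2) ^ 2 - 2 * x 3 * (x 7 - x 0) ^ 2
      - 2 * x 6 * (x 5 - x 1) ^ 2 + 2 * (x 7 - x 0) * (x 4 - x 2) * (x 5 - x 1) := by
  rw [L1, Matrix.det_fin_three]
  simp only [Matrix.of_apply, Matrix.cons_val', Matrix.cons_val_zero, Matrix.cons_val_one,
    Matrix.cons_val_two, Matrix.empty_val', Matrix.cons_val_fin_one, Matrix.head_cons,
    Matrix.tail_cons, Matrix.head_fin_const]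
  ring

theorem det_L1_diagShift (x : Fin 9 → ℝ) (δ : ℝ) :
    (L1 (diagShift x δ)).det = (L1 x).det
      - 2 * δ * ((x 0 - x 7) ^ 2 - (x 1 - x 5) ^ 2 + 4 * (x 3 - x 6) * x 8) - 8 * x 8 * δ ^ 2 := by
  simp only [det_L1, diagShift, Fin.reduceEq, ↓reduceIte]
  ring

theorem diagShift_coeff_nonneg {x : Fin 9 → ℝ} (hx : Antitone x) (h8 : 0 ≤ x 8) :
    0 ≤ (x 0 - x 7) ^ 2 - (x 1 - x 5) ^ 2 + 4 * (x 3 - x 6) * x 8 := by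
  have h01 : x 1 ≤ x 0 := hx (by decide)
  have h15 : x 5 ≤ x 1 := hx (by decide)
  have h57 : x 7 ≤ x 5 := hx (by decide)
  have h36 : x 6 ≤ x 3 := hx (by decide)
  have hsq : (x 1 - x 5) ^ 2 ≤ (x 0 - x 7) ^ 2 :=
    pow_le_pow_left₀ (by linarith) (by linarith) 2
  have hprod : 0 ≤ (x 3 - x 6) * x 8 := mul_nonneg (by linarith) h8
  linarith

theorem det_L1_perturbed_neg (x : Fin 9 → ℝ) (δ : ℝ) (hδ : 0 < δ)
    (x' : Fin 9 → ℝ)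
    (hx' : x' = fun i => if i = 3 then x 3 + δ else if i = 6 then x 6 - δ else x i)
    (hsort : ∀ i j : Fin 9, i ≤ j → x j ≤ x i)
    (hpos : ∀ i, 0 < x i)
    (hdet : (L1 x).det = 0) :
    (L1 x').det < 0 := by
  have hshift : x' = diagShift x δ := hx'
  have hcoeff := diagShift_coeff_nonneg hsort (hpos 8).le
  have hquad : 0 < x 8 * δ ^ 2 := by have := hpos 8; positivity
  rw [hshift, det_L1_diagShift, hdet]
  linarith [mul_nonneg hδ.le hcoeff]
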